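/- Assume additionally 1 < q < p < N and set q* := Nq/(N − q). There exists a constant C > 0 such that for every u ∈ C_c^∞(Ω), ‖u‖_{L^{q*}(Ω)} ≤ C ‖ |∇u| ‖_Θ, where |∇u| denotes the pointwise Euclidean norm of the gradient of u. (Sobolev-type embedding of the double-phase gradient norm into L^{q*}.) -/

import Mathlib

open MeasureTheory ENNReal Filter Topology

/-- The double-phase modular `ρ_Θ(u) = ∫_Ω (a(x)|u(x)|^p + |u(x)|^q) dx`, valued in `[0,∞]`. -/
noncomputable def rhoTheta {N : ℕ} (Ω : Set (EuclideanSpace ℝ (Fin N)))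
    (a : EuclideanSpace ℝ (Fin N) → ℝ) (p q : ℝ)
    (u : EuclideanSpace ℝ (Fin N) → ℝ) : ℝ≥0∞ :=
  ∫⁻ x in Ω, ENNReal.ofReal (a x * |u x| ^ p + |u x| ^ q)

/-- The Luxemburg norm `‖u‖_Θ = inf {t > 0 : ρ_Θ(u/t) ≤ 1}`, with `inf ∅ = ∞`. -/
noncomputable def luxNorm {N : ℕ} (Ω : Set (EuclideanSpace ℝ (Fin N)))
    (a : EuclideanSpace ℝ (Fin N) → ℝ) (p q : ℝ)
    (u : EuclideanSpace ℝ (Fin N) → ℝ) : ℝ≥0∞ :=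
  sInf (ENNReal.ofReal '' {t : ℝ | 0 < t ∧ rhoTheta Ω a p q (fun x => u x / t) ≤ 1})

/-- The `L^q` norm over `Ω` is bounded by the Luxemburg norm. -/
lemma eLpNorm_le_luxNorm {N : ℕ} (Ω : Set (EuclideanSpace ℝ (Fin N)))
    (a : EuclideanSpace ℝ (Fin N) → ℝ) (p q : ℝ) (hq0 : 0 < q)
    (ha0 : ∀ᵐ x ∂(volume.restrict Ω), 0 ≤ a x)
    (v : EuclideanSpace ℝ (Fin N) → ℝ) :
    eLpNorm v (ENNReal.ofReal q) (volume.restrict Ω) ≤ luxNorm Ω a p q v := by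
  apply le_sInf
  rintro b ⟨t, ⟨ht, hρ⟩, rfl⟩
  have htq : 0 < t ^ q := Real.rpow_pos_of_pos ht q
  -- Step A: drop the `a` term
  have hA : ∫⁻ x in Ω, ENNReal.ofReal (|v x / t| ^ q) ≤ 1 := by
    refine le_trans (le_trans (lintegral_mono_ae ?_) le_rfl) hρ
    filter_upwards [ha0] with x hx
    apply ENNReal.ofReal_le_ofReal
    have : 0 ≤ a x * |v x / t| ^ p := mul_nonneg hx (Real.rpow_nonneg (abs_nonneg _) p)
    linarith
  -- rewrite the integrand
  have hB : ∀ x, ENNReal.ofReal (|v x / t| ^ q)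
      = (‖v x‖₊ : ℝ≥0∞) ^ q / ENNReal.ofReal (t ^ q) := by
    intro x
    rw [abs_div, abs_of_pos ht, Real.div_rpow (abs_nonneg _) ht.le,
      ENNReal.ofReal_div_of_pos htq,
      ← ENNReal.ofReal_rpow_of_nonneg (abs_nonneg _) hq0.le]
    congr 2
    rw [← Real.norm_eq_abs, ofReal_norm, enorm_eq_nnnorm]
  have hC : (∫⁻ x in Ω, (‖v x‖₊ : ℝ≥0∞) ^ q) / ENNReal.ofReal (t ^ q) ≤ 1 := by
    rw [ENNReal.div_eq_inv_mul, ← lintegral_const_mul' _ _ (by simpa using htq)]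
    · refine le_trans (le_of_eq ?_) hA
      refine lintegral_congr fun x => ?_
      rw [hB x, ENNReal.div_eq_inv_mul]
  have hD : (∫⁻ x in Ω, (‖v x‖₊ : ℝ≥0∞) ^ q) ≤ ENNReal.ofReal (t ^ q) := by
    rw [ENNReal.div_le_iff_le_mul (Or.inl (by simp [htq])) (Or.inl ENNReal.ofReal_ne_top)] at hC
    simpa using hC
  rw [eLpNorm_eq_lintegral_rpow_enorm_toReal (by simp [hq0, hq0.ne']) (by simp),
    ENNReal.toReal_ofReal hq0.le]
  simp only [enorm_eq_nnnorm]
  calc (∫⁻ x in Ω, (‖v x‖₊ : ℝ≥0∞) ^ q) ^ (1 / q)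
      ≤ (ENNReal.ofReal (t ^ q)) ^ (1 / q) :=
        ENNReal.rpow_le_rpow hD (by positivity)
    _ = ENNReal.ofReal t := by
        rw [← ENNReal.ofReal_rpow_of_nonneg ht.le hq0.le, ← ENNReal.rpow_mul,
          mul_one_div, div_self hq0.ne', ENNReal.rpow_one]

/-- Sobolev-type embedding: for `1 < q < p < N` and `q* = Nq/(N-q)` there is
`C > 0` with `‖u‖_(L^(q*)) ≤ C ‖ |∇u| ‖_Θ` for all `u ∈ C_c^∞(Ω)`. -/
theorem statement9 {N : ℕ} (hN : 1 ≤ N) (Ω : Set (EuclideanSpace ℝ (Fin N)))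
    (hΩo : IsOpen Ω) (hΩb : Bornology.IsBounded Ω)
    (p q : ℝ) (hq1 : 1 < q) (hqp : q < p)
    (a : EuclideanSpace ℝ (Fin N) → ℝ) (ha : Measurable a)
    (haB : ∃ M : ℝ, ∀ᵐ x ∂(volume.restrict Ω), a x ≤ M)
    (ha0 : ∀ᵐ x ∂(volume.restrict Ω), 0 ≤ a x)
    (hpN : p < N) :
    ∃ C : ℝ, 0 < C ∧ ∀ u : EuclideanSpace ℝ (Fin N) → ℝ,
      ContDiff ℝ (⊤ : ℕ∞) u → HasCompactSupport u → tsupport u ⊆ Ω →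
      eLpNorm u (ENNReal.ofReal ((N : ℝ) * q / ((N : ℝ) - q))) (volume.restrict Ω) ≤
        ENNReal.ofReal C * luxNorm Ω a p q (fun x => ‖fderiv ℝ u x‖) := by
  have hq0 : 0 < q := lt_trans one_pos hq1
  have hqN : q < (N : ℝ) := hqp.trans hpN
  have hNq : (0 : ℝ) < (N : ℝ) - q := by linarith
  have hN0 : (0 : ℝ) < (N : ℝ) := lt_trans hq0 hqN
  set qR : NNReal := q.toNNReal with hqR
  set q'R : NNReal := ((N : ℝ) * q / ((N : ℝ) - q)).toNNReal with hq'R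
  have hqRc : (qR : ℝ) = q := Real.coe_toNNReal _ hq0.le
  have hq'Rc : (q'R : ℝ) = (N : ℝ) * q / ((N : ℝ) - q) :=
    Real.coe_toNNReal _ (by positivity)
  set K : NNReal := MeasureTheory.SNormLESNormFDerivOfEqConst ℝ
    (volume : Measure (EuclideanSpace ℝ (Fin N))) qR with hK
  refine ⟨max (K : ℝ) 1, lt_max_of_lt_right one_pos, fun u hu h2u h3u => ?_⟩
  have hfd : 0 < Module.finrank ℝ (EuclideanSpace ℝ (Fin N)) := by
    simpa using Nat.lt_of_lt_of_le Nat.zero_lt_one hN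
  have hrank : (Module.finrank ℝ (EuclideanSpace ℝ (Fin N)) : ℝ) = (N : ℝ) := by simp
  have hsob := MeasureTheory.eLpNorm_le_eLpNorm_fderiv_of_eq
    (F := ℝ) (μ := (volume : Measure (EuclideanSpace ℝ (Fin N))))
    (hu.of_le (by simp)) h2u
    (p := qR) (p' := q'R)
    (by rw [← NNReal.coe_le_coe, hqRc]; exact_mod_cast hq1.le) hfd
    (by rw [hq'Rc, hrank, NNReal.coe_inv, hqRc]; field_simp)
  -- rewrite exponents
  have he1 : (q'R : ℝ≥0∞) = ENNReal.ofReal ((N : ℝ) * q / ((N : ℝ) - q)) := rfl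
  have he2 : (qR : ℝ≥0∞) = ENNReal.ofReal q := rfl
  rw [he1, he2] at hsob
  -- fderiv supported in Ω
  have hsupp : Function.support (fderiv ℝ u) ⊆ Ω :=
    (support_fderiv_subset ℝ).trans h3u
  have hres : eLpNorm (fderiv ℝ u) (ENNReal.ofReal q) volume
      = eLpNorm (fderiv ℝ u) (ENNReal.ofReal q) (volume.restrict Ω) := by
    rw [← eLpNorm_indicator_eq_eLpNorm_restrict (f := fderiv ℝ u) hΩo.measurableSet,
      Set.indicator_eq_self.mpr hsupp]
  calc eLpNorm u (ENNReal.ofReal ((N : ℝ) * q / ((N : ℝ) - q))) (volume.restrict Ω)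
      ≤ eLpNorm u (ENNReal.ofReal ((N : ℝ) * q / ((N : ℝ) - q))) volume :=
        eLpNorm_mono_measure _ Measure.restrict_le_self
    _ ≤ (K : ℝ≥0∞) * eLpNorm (fderiv ℝ u) (ENNReal.ofReal q) volume := hsob
    _ = (K : ℝ≥0∞) * eLpNorm (fun x => ‖fderiv ℝ u x‖) (ENNReal.ofReal q)
          (volume.restrict Ω) := by rw [hres, eLpNorm_norm]
    _ ≤ ENNReal.ofReal (max (K : ℝ) 1) * luxNorm Ω a p q (fun x => ‖fderiv ℝ u x‖) := by
        gcongr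
        · calc (K : ℝ≥0∞) = ENNReal.ofReal (K : ℝ) := ENNReal.ofReal_coe_nnreal.symm
            _ ≤ ENNReal.ofReal (max (K : ℝ) 1) :=
              ENNReal.ofReal_le_ofReal (le_max_left _ _)
        · exact eLpNorm_le_luxNorm Ω a p q hq0 ha0 _
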